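/- arXiv:2503.01913 — 10 statements merged into one kernel-verified Lean document; each statement's English description precedes it below -/
import Mathlib

section
/- Let n ≥ 1 and let r = (r_0, r_1, …, r_{2n}) be a vector of positive integers whose entries have greatest common divisor 1. Then r is an arithmetical r-structure on the fan graph F_n (i.e., there exists a vector d of positive integers with (diag(d) − A(F_n))·r = 0) if and only if: r_0 divides r_1 + r_2 + ⋯ + r_{2n}; r_i divides r_0 + r_{i+1} for every odd i with 1 ≤ i ≤ 2n−1; and r_i divides r_0 + r_{i−1} for every even i with 2 ≤ i ≤ 2n. -/
/-- Adjacency matrix of the fan graph `F_n` on vertices `{0, 1, …, 2n}`: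
vertex `0` is joined to every other vertex, and `2k-1` is joined to `2k`
for `1 ≤ k ≤ n`. -/
def fanAdj (n : ℕ) : Matrix (Fin (2*n+1)) (Fin (2*n+1)) ℤ :=
  Matrix.of fun i j =>
    if (i.val = 0 ∧ j.val ≠ 0) ∨ (j.val = 0 ∧ i.val ≠ 0)
       ∨ (i.val % 2 = 1 ∧ j.val = i.val + 1)
       ∨ (j.val % 2 = 1 ∧ i.val = j.val + 1) then 1 else 0

lemma fan_row_zero (n : ℕ) (r : Fin (2*n+1) → ℤ) :
    ((fanAdj n).mulVec r) 0
      = ∑ j ∈ Finset.univ.filter (fun j : Fin (2*n+1) => j ≠ 0), r j := by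
  unfold Matrix.mulVec dotProduct
  rw [Finset.sum_filter]
  refine Finset.sum_congr rfl fun j _ => ?_
  by_cases hj : j = 0
  · subst hj; simp [fanAdj]
  · have hj' : j.val ≠ 0 := fun h => hj (Fin.ext h)
    simp [fanAdj, hj, hj']

lemma fan_row_odd (n : ℕ) (r : Fin (2*n+1) → ℤ) (i : Fin (2*n+1))
    (hi : i.val % 2 = 1) :
    ((fanAdj n).mulVec r) i = r 0 + r (i + 1) := by
  have hlt : i.val < 2*n := by have := i.isLt; omega
  have hs : (i + 1).val = i.val + 1 := by
    rw [Fin.val_add_one_of_lt]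
    exact Fin.lt_iff_val_lt_val.mpr (by simpa [Fin.last] using hlt)
  have hne : (0 : Fin (2*n+1)) ≠ i + 1 := by
    intro h
    have := congrArg Fin.val h
    simp [hs] at this
  have key : ∀ j : Fin (2*n+1), fanAdj n i j * r j
      = if j ∈ ({0, i + 1} : Finset (Fin (2*n+1))) then r j else 0 := by
    intro j
    by_cases h0 : j = 0
    · subst h0
      have : i.val ≠ 0 := by omega
      simp [fanAdj, this, show i ≠ 0 from by rintro rfl; simp at this]
    · by_cases h1 : j = i + 1
      · subst h1
        simp [fanAdj, hi, hs]
      · have hv0 : j.val ≠ 0 := fun h => h0 (Fin.ext h)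
        have hv1 : j.val ≠ i.val + 1 := fun h => h1 (Fin.ext (by rw [hs, h]))
        have hiv : i.val ≠ 0 := by omega
        have hlast : ¬ (j.val % 2 = 1 ∧ i.val = j.val + 1) := by
          rintro ⟨hj2, hij⟩; omega
        simp [fanAdj, h0, h1, hv0, hv1, hiv, hlast, show i ≠ 0 from by rintro rfl; simp at hiv]
  unfold Matrix.mulVec dotProduct
  rw [Finset.sum_congr rfl fun j _ => key j, Finset.sum_ite_mem,
    Finset.univ_inter, Finset.sum_pair hne]

lemma fan_row_even (n : ℕ) (r : Fin (2*n+1) → ℤ) (i : Fin (2*n+1))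
    (hi : i.val % 2 = 0) (hi0 : i ≠ 0) :
    ((fanAdj n).mulVec r) i = r 0 + r (i - 1) := by
  have hiv : i.val ≠ 0 := fun h => hi0 (Fin.ext h)
  have hs : (i - 1).val = i.val - 1 := by
    rw [Fin.coe_sub_one, if_neg hi0]
  have hne : (0 : Fin (2*n+1)) ≠ i - 1 := by
    intro h
    have := congrArg Fin.val h
    rw [hs] at this
    simp at this
    omega
  have key : ∀ j : Fin (2*n+1), fanAdj n i j * r j
      = if j ∈ ({0, i - 1} : Finset (Fin (2*n+1))) then r j else 0 := by
    intro j
    by_cases h0 : j = 0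
    · subst h0
      simp [fanAdj, hiv, hi0]
    · by_cases h1 : j = i - 1
      · subst h1
        have hj2 : (i - 1).val % 2 = 1 := by omega
        have hij : i.val = (i - 1).val + 1 := by omega
        simp [fanAdj, hj2, hij]
      · have hv0 : j.val ≠ 0 := fun h => h0 (Fin.ext h)
        have hv1 : j.val ≠ i.val - 1 := fun h => h1 (Fin.ext (by rw [hs, h]))
        have hc3 : ¬ (i.val % 2 = 1 ∧ j.val = i.val + 1) := by
          rintro ⟨h, _⟩; omega
        have hc4 : ¬ (j.val % 2 = 1 ∧ i.val = j.val + 1) := by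
          rintro ⟨_, h⟩; omega
        simp [fanAdj, h0, h1, hv0, hiv, hc3, hc4, hi0]
  unfold Matrix.mulVec dotProduct
  rw [Finset.sum_congr rfl fun j _ => key j, Finset.sum_ite_mem,
    Finset.univ_inter, Finset.sum_pair hne]

/-- `r` (positive with gcd 1) is an arithmetical r-structure on `F_n` iff the
divisibility conditions hold. -/
theorem stmt_0 (n : ℕ) (hn : 1 ≤ n) (r : Fin (2*n+1) → ℤ)
    (hr : ∀ i, 0 < r i) (hg : Finset.univ.gcd r = 1) :
    (∃ d : Fin (2*n+1) → ℤ, (∀ i, 0 < d i) ∧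
      (Matrix.diagonal d - fanAdj n).mulVec r = 0) ↔
    ((r 0 ∣ ∑ i ∈ Finset.univ.filter (fun i : Fin (2*n+1) => i ≠ 0), r i) ∧
     (∀ i : Fin (2*n+1), i.val % 2 = 1 → r i ∣ r 0 + r (i + 1)) ∧
     (∀ i : Fin (2*n+1), i.val % 2 = 0 → i ≠ 0 → r i ∣ r 0 + r (i - 1))) := by
  have hmv : ∀ d : Fin (2*n+1) → ℤ,
      ((Matrix.diagonal d - fanAdj n).mulVec r = 0 ↔
        ∀ i, d i * r i = ((fanAdj n).mulVec r) i) := by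
    intro d
    rw [Matrix.sub_mulVec, sub_eq_zero, funext_iff]
    constructor
    · intro h i
      have := h i
      rwa [Matrix.mulVec_diagonal] at this
    · intro h i
      rw [Matrix.mulVec_diagonal]
      exact h i
  constructor
  · rintro ⟨d, hd, hmul⟩
    rw [hmv] at hmul
    refine ⟨?_, ?_, ?_⟩
    · rw [← fan_row_zero n r, ← hmul 0]
      exact Dvd.intro (d 0) (mul_comm _ _)
    · intro i hi
      rw [← fan_row_odd n r i hi, ← hmul i]
      exact Dvd.intro (d i) (mul_comm _ _)
    · intro i hi hi0
      rw [← fan_row_even n r i hi hi0, ← hmul i]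
      exact Dvd.intro (d i) (mul_comm _ _)
  · rintro ⟨h0, hodd, heven⟩
    have hdvd : ∀ i, r i ∣ ((fanAdj n).mulVec r) i := by
      intro i
      by_cases e0 : i = 0
      · subst e0; rw [fan_row_zero]; exact h0
      · rcases Nat.even_or_odd i.val with he | ho
        · rw [fan_row_even n r i (Nat.even_iff.mp he) e0]
          exact heven i (Nat.even_iff.mp he) e0
        · rw [fan_row_odd n r i (Nat.odd_iff.mp ho)]
          exact hodd i (Nat.odd_iff.mp ho)
    have hpos : ∀ i, 0 < ((fanAdj n).mulVec r) i := by
      intro i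
      by_cases e0 : i = 0
      · subst e0
        rw [fan_row_zero]
        refine Finset.sum_pos (fun j _ => hr j) ?_
        refine ⟨⟨1, by omega⟩, ?_⟩
        rw [Finset.mem_filter]
        exact ⟨Finset.mem_univ _, fun h => by have := congrArg Fin.val h; simp at this⟩
      · rcases Nat.even_or_odd i.val with he | ho
        · rw [fan_row_even n r i (Nat.even_iff.mp he) e0]
          exact add_pos (hr _) (hr _)
        · rw [fan_row_odd n r i (Nat.odd_iff.mp ho)]
          exact add_pos (hr _) (hr _)
    refine ⟨fun i => ((fanAdj n).mulVec r) i / r i, ?_, ?_⟩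
    · intro i
      show 0 < ((fanAdj n).mulVec r) i / r i
      obtain ⟨c, hc⟩ := hdvd i
      rw [hc, Int.mul_ediv_cancel_left _ (hr i).ne']
      have h := hpos i
      rw [hc] at h
      nlinarith [hr i]
    · rw [hmv]
      intro i
      exact Int.ediv_mul_cancel (hdvd i)
end

section
/- Let n ≥ 1 and let (d, r) be an arithmetical structure on the fan graph F_n with r not equal to the all-ones vector. Then exactly one of the following holds: (1) d_0 > 2n and d_i < 2 for some i with 1 ≤ i ≤ 2n; (2) d_0 < 2n and d_i > 2 for some i with 1 ≤ i ≤ 2n; (3) d_0 = 2n and there exist i, j with 1 ≤ i, j ≤ 2n such that d_i < 2 and d_j > 2. -/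
/-- An arithmetical structure on a graph with adjacency matrix `A`. -/
def IsArithStructure {N : ℕ} (A : Matrix (Fin N) (Fin N) ℤ) (d r : Fin N → ℤ) : Prop :=
  (∀ i, 0 < d i) ∧ (∀ i, 0 < r i) ∧ Finset.univ.gcd r = 1 ∧
    (Matrix.diagonal d - A).mulVec r = 0

def fanPartner (n : ℕ) (i : Fin (2*n+1)) : Fin (2*n+1) :=
  ⟨if i.val % 2 = 1 then i.val + 1 else i.val - 1, by
    have := i.isLt; split <;> omega⟩

lemma fanPartner_ne_zero (n : ℕ) (i : Fin (2*n+1)) (hi : i ≠ 0) :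
    fanPartner n i ≠ 0 := by
  have hi' : i.val ≠ 0 := fun h => hi (Fin.ext (by rw [h, Fin.val_zero]))
  simp only [Ne, Fin.ext_iff, fanPartner, Fin.val_zero]
  split <;> omega

lemma fanPartner_invol (n : ℕ) (i : Fin (2*n+1)) (hi : i ≠ 0) :
    fanPartner n (fanPartner n i) = i := by
  have hi' : i.val ≠ 0 := fun h => hi (Fin.ext (by rw [h, Fin.val_zero]))
  have := i.isLt
  apply Fin.ext
  simp only [fanPartner]
  split_ifs <;> omega

lemma fanAdj_apply (n : ℕ) (i j : Fin (2*n+1)) (hi : i ≠ 0) :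
    fanAdj n i j = if j = 0 ∨ j = fanPartner n i then 1 else 0 := by
  have hi' : i.val ≠ 0 := fun h => hi (Fin.ext (by rw [h, Fin.val_zero]))
  have hii := i.isLt; have hjj := j.isLt
  simp only [fanAdj, Matrix.of_apply, Fin.ext_iff, fanPartner, Fin.val_zero]
  split_ifs <;> first | rfl | omega

lemma fanAdj_zero (n : ℕ) (j : Fin (2*n+1)) :
    fanAdj n 0 j = if j = 0 then 0 else 1 := by
  rcases eq_or_ne j 0 with hj | hj
  · subst hj; simp [fanAdj]
  · have hj' : j.val ≠ 0 := fun h => hj (Fin.ext (by rw [h, Fin.val_zero]))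
    simp [fanAdj, hj, hj']


/-- If `(d, r)` is an arithmetical structure on `F_n` with `r` not the all-ones
vector, then exactly one of the three stated alternatives holds. -/
theorem stmt_1 (n : ℕ) (hn : 1 ≤ n) (d r : Fin (2*n+1) → ℤ)
    (h : IsArithStructure (fanAdj n) d r) (hr1 : r ≠ fun _ => 1) :
    (((2*n : ℤ) < d 0 ∧ ∃ i, i ≠ 0 ∧ d i < 2) ∧
      ¬(d 0 < (2*n : ℤ) ∧ ∃ i, i ≠ 0 ∧ 2 < d i) ∧
      ¬(d 0 = (2*n : ℤ) ∧ ∃ i j, i ≠ 0 ∧ j ≠ 0 ∧ d i < 2 ∧ 2 < d j)) ∨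
    (¬((2*n : ℤ) < d 0 ∧ ∃ i, i ≠ 0 ∧ d i < 2) ∧
      (d 0 < (2*n : ℤ) ∧ ∃ i, i ≠ 0 ∧ 2 < d i) ∧
      ¬(d 0 = (2*n : ℤ) ∧ ∃ i j, i ≠ 0 ∧ j ≠ 0 ∧ d i < 2 ∧ 2 < d j)) ∨
    (¬((2*n : ℤ) < d 0 ∧ ∃ i, i ≠ 0 ∧ d i < 2) ∧
      ¬(d 0 < (2*n : ℤ) ∧ ∃ i, i ≠ 0 ∧ 2 < d i) ∧
      (d 0 = (2*n : ℤ) ∧ ∃ i j, i ≠ 0 ∧ j ≠ 0 ∧ d i < 2 ∧ 2 < d j)) := by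
  obtain ⟨hd, hr, hgcd, heq⟩ := h
  -- generic row equation
  have hrow : ∀ i, d i * r i = ∑ j, fanAdj n i j * r j := by
    intro i
    have h1 := congrFun heq i
    rw [Pi.zero_apply, Matrix.sub_mulVec, Pi.sub_apply, sub_eq_zero,
      Matrix.mulVec_diagonal] at h1
    rw [h1]
    rfl
  set E : Finset (Fin (2*n+1)) := Finset.univ.erase 0 with hE
  have hmemE : ∀ i : Fin (2*n+1), i ∈ E ↔ i ≠ 0 := by
    intro i; simp [hE]
  -- row 0
  have h0 : d 0 * r 0 = ∑ i ∈ E, r i := by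
    have hterm : ∀ j, fanAdj n 0 j * r j = if j = 0 then 0 else r j := by
      intro j; rw [fanAdj_zero]; split_ifs <;> ring
    rw [hrow 0, Finset.sum_congr rfl fun j _ => hterm j,
      ← Finset.sum_erase_add _ _ (Finset.mem_univ (0 : Fin (2*n+1))), if_pos rfl, add_zero]
    exact Finset.sum_congr rfl fun j hj => if_neg (Finset.ne_of_mem_erase hj)
  -- row i for i ≠ 0
  have hrow' : ∀ i, i ≠ 0 → d i * r i = r 0 + r (fanPartner n i) := by
    intro i hi
    rw [hrow i]
    have hne : (0 : Fin (2*n+1)) ≠ fanPartner n i :=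
      fun hc => fanPartner_ne_zero n i hi hc.symm
    have : ∀ j, fanAdj n i j * r j
        = if j ∈ ({0, fanPartner n i} : Finset (Fin (2*n+1))) then r j else 0 := by
      intro j
      rw [fanAdj_apply n i j hi]
      simp only [Finset.mem_insert, Finset.mem_singleton]
      split_ifs <;> ring
    rw [Finset.sum_congr rfl fun j _ => this j, Finset.sum_ite_mem,
      Finset.univ_inter, Finset.sum_pair hne]
  -- cardinality
  have hcard : E.card = 2 * n := by
    simp [hE, Finset.card_erase_of_mem]
  -- partner sum reindex
  have hre : ∑ i ∈ E, r (fanPartner n i) = ∑ i ∈ E, r i := by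
    apply Finset.sum_bij' (fun (a : Fin (2*n+1)) (_ : a ∈ E) => fanPartner n a)
      (fun (a : Fin (2*n+1)) (_ : a ∈ E) => fanPartner n a)
    · intro a ha; exact (hmemE _).2 (fanPartner_ne_zero n a ((hmemE _).1 ha))
    · intro a ha; exact (hmemE _).2 (fanPartner_ne_zero n a ((hmemE _).1 ha))
    · intro a ha; exact fanPartner_invol n a ((hmemE _).1 ha)
    · intro a ha; exact fanPartner_invol n a ((hmemE _).1 ha)
    · intro a ha; rfl
  -- key identity
  have hkey : ∑ i ∈ E, (d i - 2) * r i = ((2*n : ℤ) - d 0) * r 0 := by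
    have h1 : ∑ i ∈ E, d i * r i = (2*n : ℤ) * r 0 + ∑ i ∈ E, r i := by
      rw [Finset.sum_congr rfl fun i hi => hrow' i ((hmemE i).1 hi)]
      rw [Finset.sum_add_distrib, Finset.sum_const, hcard, hre]
      push_cast; ring
    calc ∑ i ∈ E, (d i - 2) * r i
        = ∑ i ∈ E, d i * r i - 2 * ∑ i ∈ E, r i := by
          rw [Finset.mul_sum, ← Finset.sum_sub_distrib]
          exact Finset.sum_congr rfl fun i _ => by ring
      _ = (2*n : ℤ) * r 0 + ∑ i ∈ E, r i - 2 * ∑ i ∈ E, r i := by rw [h1]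
      _ = (2*n : ℤ) * r 0 - ∑ i ∈ E, r i := by ring
      _ = ((2*n : ℤ) - d 0) * r 0 := by rw [← h0]; ring
  have hr0 : 0 < r 0 := hr 0
  -- all d_i = 2 implies contradiction
  have hconst : ¬ (∀ i ∈ E, d i = 2) := by
    intro hall
    have hreq : ∀ i, r i = r 0 := by
      intro i
      rcases eq_or_ne i 0 with hi | hi
      · rw [hi]
      · have h1 := hrow' i hi
        have h2 := hrow' (fanPartner n i) (fanPartner_ne_zero n i hi)
        rw [fanPartner_invol n i hi] at h2
        rw [hall i ((hmemE i).2 hi)] at h1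
        rw [hall (fanPartner n i) ((hmemE _).2 (fanPartner_ne_zero n i hi))] at h2
        linarith
    have hdvd : r 0 ∣ Finset.univ.gcd r :=
      Finset.dvd_gcd fun i _ => (hreq i) ▸ dvd_refl (r 0)
    rw [hgcd] at hdvd
    have hone : r 0 = 1 := le_antisymm (Int.le_of_dvd one_pos hdvd) hr0
    exact hr1 (funext fun i => by rw [hreq i, hone])
  rcases lt_trichotomy (d 0) ((2*n : ℤ)) with hlt | heq0 | hgt
  · -- d 0 < 2n : sum positive, exists d j > 2
    have hpos : (0:ℤ) < ∑ i ∈ E, (d i - 2) * r i := by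
      rw [hkey]; exact mul_pos (by linarith) hr0
    have : ∑ i ∈ E, (0:ℤ) < ∑ i ∈ E, (d i - 2) * r i := by simpa using hpos
    obtain ⟨j, hjE, hj⟩ := Finset.exists_lt_of_sum_lt this
    have hj2 : 2 < d j := by nlinarith [hr j]
    refine Or.inr (Or.inl ⟨?_, ⟨hlt, j, (hmemE j).1 hjE, hj2⟩, ?_⟩)
    · rintro ⟨hc, -⟩; linarith
    · rintro ⟨hc, -⟩; linarith
  · -- d 0 = 2n : sum zero, both exist
    have hzero : ∑ i ∈ E, (d i - 2) * r i = 0 := by rw [hkey, heq0]; ring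
    have hex1 : ∃ i ∈ E, d i < 2 := by
      by_contra hno
      push_neg at hno
      have hnn : ∀ i ∈ E, (0:ℤ) ≤ (d i - 2) * r i :=
        fun i hi => mul_nonneg (by linarith [hno i hi]) (hr i).le
      have hall := (Finset.sum_eq_zero_iff_of_nonneg hnn).1 hzero
      exact hconst fun i hi => by nlinarith [hall i hi, hr i, hno i hi]
    obtain ⟨i, hiE, hi2⟩ := hex1
    have hex2 : ∃ j ∈ E, 2 < d j := by
      by_contra hno
      push_neg at hno
      have : ∑ j ∈ E, (d j - 2) * r j < ∑ j ∈ E, (0:ℤ) := by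
        apply Finset.sum_lt_sum
        · intro j hj
          exact mul_nonpos_of_nonpos_of_nonneg (by linarith [hno j hj]) (hr j).le
        · exact ⟨i, hiE, mul_neg_of_neg_of_pos (by linarith) (hr i)⟩
      simp [hzero] at this
    obtain ⟨j, hjE, hj2⟩ := hex2
    refine Or.inr (Or.inr ⟨?_, ?_, heq0, i, j, (hmemE i).1 hiE, (hmemE j).1 hjE, hi2, hj2⟩)
    · rintro ⟨hc, -⟩; linarith
    · rintro ⟨hc, -⟩; linarith
  · -- d 0 > 2n : sum negative, exists d i < 2
    have hneg : ∑ i ∈ E, (d i - 2) * r i < 0 := by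
      rw [hkey]; exact mul_neg_of_neg_of_pos (by linarith) hr0
    have : ∑ i ∈ E, (d i - 2) * r i < ∑ i ∈ E, (0:ℤ) := by simpa using hneg
    obtain ⟨i, hiE, hi⟩ := Finset.exists_lt_of_sum_lt this
    have hi2 : d i < 2 := by nlinarith [hr i]
    refine Or.inl ⟨⟨hgt, i, (hmemE i).1 hiE, hi2⟩, ?_, ?_⟩
    · rintro ⟨hc, -⟩; linarith
    · rintro ⟨hc, -⟩; linarith
end

section
/- Let n ≥ 1. There is exactly one arithmetical structure (d, r) on the fan graph F_n satisfying d_0 ≥ 2n and d_i ≥ 2 for all 1 ≤ i ≤ 2n, namely d = (2n, 2, 2, …, 2) and r = (1, 1, …, 1). -/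
def mate {n : ℕ} (i : Fin (2*n+1)) : Fin (2*n+1) :=
  if h : i.val % 2 = 1 then ⟨i.val + 1, by omega⟩ else ⟨i.val - 1, by omega⟩

lemma mate_val {n : ℕ} (i : Fin (2*n+1)) :
    (mate i).val = if i.val % 2 = 1 then i.val + 1 else i.val - 1 := by
  unfold mate; split <;> rfl

lemma mate_mate {n : ℕ} (i : Fin (2*n+1)) : mate (mate i) = i := by
  apply Fin.ext
  rw [mate_val, mate_val]
  split_ifs <;> omega

lemma mate_ne_zero {n : ℕ} (i : Fin (2*n+1)) (hi : i ≠ 0) : mate i ≠ 0 := by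
  intro h
  apply hi
  apply Fin.ext
  have h2 := congrArg Fin.val h
  rw [mate_val] at h2
  simp only [Fin.val_zero] at h2 ⊢
  by_cases hp : i.val % 2 = 1
  · simp [hp] at h2
  · simp [hp] at h2; omega

lemma zero_ne_mate {n : ℕ} (i : Fin (2*n+1)) (hi : i ≠ 0) : (0 : Fin (2*n+1)) ≠ mate i :=
  fun h => mate_ne_zero i hi h.symm

lemma adj_row0 {n : ℕ} (j : Fin (2*n+1)) :
    fanAdj n 0 j = if j = 0 then 0 else 1 := by
  simp only [fanAdj, Matrix.of_apply]
  rcases eq_or_ne j 0 with h | h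
  · subst h; simp
  · have hv : j.val ≠ 0 := fun hh => h (Fin.ext hh)
    rw [if_neg h, if_pos]
    left; exact ⟨rfl, hv⟩

lemma adj_row {n : ℕ} (i j : Fin (2*n+1)) (hi : i ≠ 0) :
    fanAdj n i j = if j = 0 ∨ j = mate i then 1 else 0 := by
  have hv : i.val ≠ 0 := fun hh => hi (Fin.ext hh)
  have hmv := mate_val i
  simp only [fanAdj, Matrix.of_apply]
  congr 1
  simp only [eq_iff_iff]
  constructor
  · rintro (⟨h1, _⟩ | ⟨h1, _⟩ | ⟨h1, h2⟩ | ⟨h1, h2⟩)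
    · omega
    · left; exact Fin.ext h1
    · right; apply Fin.ext; rw [hmv, if_pos h1]; exact h2
    · right; apply Fin.ext; rw [hmv, if_neg (by omega)]; omega
  · rintro (h | h)
    · right; left; exact ⟨congrArg Fin.val h, hv⟩
    · have h2 := congrArg Fin.val h
      rw [hmv] at h2
      by_cases hp : i.val % 2 = 1
      · rw [if_pos hp] at h2
        right; right; left; exact ⟨hp, h2⟩
      · rw [if_neg hp] at h2
        right; right; right
        constructor <;> omega

lemma rowsum {n : ℕ} (i : Fin (2*n+1)) (hi : i ≠ 0) (r : Fin (2*n+1) → ℤ) :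
    ∑ j, fanAdj n i j * r j = r 0 + r (mate i) := by
  have key : ∀ j, fanAdj n i j * r j
      = (if j = 0 then r j else 0) + (if j = mate i then r j else 0) := by
    intro j
    rw [adj_row i j hi]
    rcases eq_or_ne j 0 with h0 | h0
    · subst h0
      rw [if_neg (zero_ne_mate i hi)]
      simp
    · rcases eq_or_ne j (mate i) with h1 | h1
      · subst h1; simp [h0]
      · simp [h0, h1]
  rw [Finset.sum_congr rfl (fun j _ => key j), Finset.sum_add_distrib,
    Finset.sum_ite_eq' Finset.univ 0 r, Finset.sum_ite_eq' Finset.univ (mate i) r,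
    if_pos (Finset.mem_univ _), if_pos (Finset.mem_univ _)]

lemma rowsum0 {n : ℕ} (r : Fin (2*n+1) → ℤ) :
    ∑ j, fanAdj n 0 j * r j = ∑ j ∈ Finset.univ.erase 0, r j := by
  rw [Finset.sum_erase_eq_sub (Finset.mem_univ 0)]
  have key : ∀ j : Fin (2*n+1), fanAdj n 0 j * r j = r j - (if j = 0 then r j else 0) := by
    intro j
    rw [adj_row0]
    rcases eq_or_ne j 0 with h | h <;> simp [h]
  rw [Finset.sum_congr rfl (fun j _ => key j), Finset.sum_sub_distrib,
    Finset.sum_ite_eq' Finset.univ 0 r, if_pos (Finset.mem_univ 0)]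

lemma eqn_of {n : ℕ} {d r : Fin (2*n+1) → ℤ}
    (h : (Matrix.diagonal d - fanAdj n).mulVec r = 0) (i : Fin (2*n+1)) :
    d i * r i = ∑ j, fanAdj n i j * r j := by
  have h1 := congrFun h i
  simp only [Matrix.sub_mulVec, Pi.sub_apply, Matrix.mulVec_diagonal, Pi.zero_apply] at h1
  simp only [Matrix.mulVec, dotProduct] at h1
  exact sub_eq_zero.mp h1


/-- The Laplacian structure `d = (2n, 2, …, 2)`, `r = (1, …, 1)` is the unique
arithmetical structure on `F_n` with `d_0 ≥ 2n` and `d_i ≥ 2` for `i ≠ 0`. -/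
theorem stmt_3 (n : ℕ) (hn : 1 ≤ n) (d r : Fin (2*n+1) → ℤ) :
    (IsArithStructure (fanAdj n) d r ∧ (2*n : ℤ) ≤ d 0 ∧ (∀ i, i ≠ 0 → 2 ≤ d i)) ↔
    (d = (fun i => if i = 0 then (2*n : ℤ) else 2) ∧ r = fun _ => 1) := by
  have hn' : (1:ℤ) ≤ (n:ℤ) := by exact_mod_cast hn
  constructor
  · rintro ⟨⟨hdpos, hrpos, hgcd, hmul⟩, hd0, hdi⟩
    have eqn := eqn_of hmul
    set E := Finset.univ.erase (0 : Fin (2*n+1)) with hE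
    have cardE : E.card = 2*n := by
      rw [hE, Finset.card_erase_of_mem (Finset.mem_univ 0), Finset.card_univ, Fintype.card_fin]
      omega
    have e0 : d 0 * r 0 = ∑ j ∈ E, r j := by rw [eqn 0, rowsum0]
    have ei : ∀ i ∈ E, d i * r i = r 0 + r (mate i) := fun i hi => by
      rw [eqn i, rowsum i (Finset.ne_of_mem_erase hi)]
    have hmatesum : ∑ i ∈ E, r (mate i) = ∑ i ∈ E, r i := by
      apply Finset.sum_nbij' (fun a => mate a) (fun a => mate a)
      · intro a ha
        exact Finset.mem_erase.mpr ⟨mate_ne_zero a (Finset.ne_of_mem_erase ha), Finset.mem_univ _⟩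
      · intro a ha
        exact Finset.mem_erase.mpr ⟨mate_ne_zero a (Finset.ne_of_mem_erase ha), Finset.mem_univ _⟩
      · intro a _; exact mate_mate a
      · intro a _; exact mate_mate a
      · intro a _; rfl
    have hsum : ∑ i ∈ E, d i * r i = 2*n * r 0 + ∑ i ∈ E, r i := by
      rw [Finset.sum_congr rfl ei, Finset.sum_add_distrib, Finset.sum_const, cardE, hmatesum,
        nsmul_eq_mul]
      push_cast
      ring
    have hle : ∀ i ∈ E, 2 * r i ≤ d i * r i := fun i hi =>
      mul_le_mul_of_nonneg_right (hdi i (Finset.ne_of_mem_erase hi)) (le_of_lt (hrpos i))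
    have h1 : 2 * ∑ i ∈ E, r i ≤ 2*n * r 0 + ∑ i ∈ E, r i := by
      rw [← hsum, Finset.mul_sum]
      exact Finset.sum_le_sum hle
    have h3 : 2*n * r 0 ≤ ∑ i ∈ E, r i := by
      rw [← e0]
      exact mul_le_mul_of_nonneg_right hd0 (le_of_lt (hrpos 0))
    have hSeq : ∑ i ∈ E, r i = 2*n*r 0 := le_antisymm (by linarith) h3
    have hd0eq : d 0 = 2*n := by
      have h4 : d 0 * r 0 = 2*n * r 0 := by rw [e0, hSeq]
      exact mul_right_cancel₀ (ne_of_gt (hrpos 0)) h4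
    have termeq : ∀ i ∈ E, 2 * r i = d i * r i := by
      rw [← Finset.sum_eq_sum_iff_of_le hle, hsum, ← Finset.mul_sum, hSeq]
      ring
    have hdieq : ∀ i, i ≠ 0 → d i = 2 := fun i hi =>
      (mul_right_cancel₀ (ne_of_gt (hrpos i))
        (termeq i (Finset.mem_erase.mpr ⟨hi, Finset.mem_univ i⟩))).symm
    have hr2 : ∀ i ∈ E, 2 * r i = r 0 + r (mate i) := fun i hi =>
      (termeq i hi).trans (ei i hi)
    have hreq : ∀ i, r i = r 0 := by
      intro i
      rcases eq_or_ne i 0 with h | h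
      · rw [h]
      · have hiE : i ∈ E := Finset.mem_erase.mpr ⟨h, Finset.mem_univ i⟩
        have hmE : mate i ∈ E := Finset.mem_erase.mpr ⟨mate_ne_zero i h, Finset.mem_univ _⟩
        have a1 := hr2 i hiE
        have a2 := hr2 (mate i) hmE
        rw [mate_mate] at a2
        linarith
    have hr0 : r 0 = 1 := by
      have hdvd : r 0 ∣ Finset.univ.gcd r :=
        Finset.dvd_gcd (fun i _ => by rw [hreq i])
      rw [hgcd] at hdvd
      have h5 := Int.le_of_dvd one_pos hdvd
      have h6 := hrpos 0
      omega
    constructor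
    · funext i
      rcases eq_or_ne i 0 with h | h
      · rw [h, if_pos rfl, hd0eq]
      · rw [if_neg h]
        exact hdieq i h
    · funext i
      rw [hreq i, hr0]
  · rintro ⟨hd, hr⟩
    subst hd hr
    refine ⟨⟨?_, fun i => one_pos, ?_, ?_⟩, ?_, ?_⟩
    · intro i
      show 0 < if i = 0 then 2*(n:ℤ) else 2
      split
      · linarith
      · norm_num
    · have hdvd : Finset.univ.gcd (fun _ : Fin (2*n+1) => (1:ℤ)) ∣ 1 :=
        Finset.gcd_dvd (Finset.mem_univ 0)
      rcases Int.isUnit_iff.mp (isUnit_of_dvd_one hdvd) with h | h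
      · exact h
      · have h3 := Finset.normalize_gcd (s := Finset.univ)
          (f := fun _ : Fin (2*n+1) => (1:ℤ))
        rw [h, Int.normalize_of_nonpos (by norm_num)] at h3
        norm_num at h3
    · funext i
      simp only [Matrix.sub_mulVec, Pi.sub_apply, Matrix.mulVec_diagonal, Pi.zero_apply]
      simp only [Matrix.mulVec, dotProduct]
      rcases eq_or_ne i 0 with h | h
      · subst h
        rw [rowsum0, Finset.sum_const, Finset.card_erase_of_mem (Finset.mem_univ 0),
          Finset.card_univ, Fintype.card_fin, if_pos rfl, nsmul_eq_mul]
        push_cast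
        ring
      · rw [rowsum i h, if_neg h]
        ring
    · show (2*(n:ℤ)) ≤ if (0 : Fin (2*n+1)) = 0 then 2*(n:ℤ) else 2
      rw [if_pos rfl]
    · intro i hi
      show (2:ℤ) ≤ if i = 0 then 2*(n:ℤ) else 2
      rw [if_neg hi]
end

section
/- Let n ≥ 1. The vector r = (2n, 1, 1, …, 1) (that is, r_0 = 2n and r_i = 1 for all 1 ≤ i ≤ 2n) is an arithmetical r-structure on the fan graph F_n; that is, there exists a vector d of positive integers such that (d, r) is an arithmetical structure on F_n. -/
lemma fan_key0 (n : ℕ) (hn : 1 ≤ n) (j : Fin (2*n+1)) :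
    fanAdj n 0 j * (if j = 0 then (2*n:ℤ) else 1) = 1 - (if j = 0 then 1 else 0) := by
  have hj : j.val < 2*n+1 := j.isLt
  simp only [fanAdj, Matrix.of_apply, Fin.ext_iff, Fin.val_zero]
  split_ifs <;> push_cast <;> simp_all <;> omega

lemma fan_key1 (n : ℕ) (i p j : Fin (2*n+1)) (hi0 : i.val ≠ 0)
    (hp : (p.val = i.val + 1 ∧ i.val % 2 = 1) ∨
          (p.val = i.val - 1 ∧ i.val % 2 = 0 ∧ 2 ≤ i.val)) :
    fanAdj n i j * (if j = 0 then (2*n:ℤ) else 1)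
      = (if j = 0 then (2*n : ℤ) else 0) + (if j = p then 1 else 0) := by
  have hj : j.val < 2*n+1 := j.isLt
  have hii : i.val < 2*n+1 := i.isLt
  simp only [fanAdj, Matrix.of_apply, Fin.ext_iff, Fin.val_zero]
  split_ifs <;> push_cast <;> simp_all <;> omega

/-- The vector `r = (2n, 1, …, 1)` is an arithmetical r-structure on `F_n`. -/
theorem stmt_4 (n : ℕ) (hn : 1 ≤ n) :
    ∃ d : Fin (2*n+1) → ℤ,
      IsArithStructure (fanAdj n) d (fun i => if i = 0 then (2*n : ℤ) else 1) := by
  refine ⟨fun i => if i = 0 then 1 else 2*n+1, ?_, ?_, ?_, ?_⟩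
  · intro i; dsimp only; split
    · norm_num
    · positivity
  · intro i; dsimp only; split
    · push_cast; omega
    · norm_num
  · have hone : ((⟨1, by omega⟩ : Fin (2*n+1)) : Fin (2*n+1)) ≠ 0 := by
      simp [Fin.ext_iff]
    have hd : Finset.univ.gcd (fun i : Fin (2*n+1) => if i = 0 then (2*n : ℤ) else 1) ∣ 1 := by
      have := Finset.gcd_dvd (f := fun i : Fin (2*n+1) => if i = 0 then (2*n : ℤ) else 1)
        (Finset.mem_univ (⟨1, by omega⟩ : Fin (2*n+1)))
      simpa [hone] using this
    have hg := Finset.normalize_gcd (s := (Finset.univ : Finset (Fin (2*n+1))))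
      (f := fun i : Fin (2*n+1) => if i = 0 then (2*n : ℤ) else 1)
    rcases Int.isUnit_iff.mp (isUnit_of_dvd_one hd) with h | h
    · exact h
    · rw [h] at hg
      norm_num [normalize_apply, Int.normUnit_eq] at hg
  · funext i
    rw [Matrix.sub_mulVec]
    simp only [Pi.sub_apply, Pi.zero_apply, Matrix.mulVec_diagonal]
    rw [sub_eq_zero]
    have hmv : (fanAdj n).mulVec (fun i : Fin (2*n+1) => if i = 0 then (2*n : ℤ) else 1) i
        = ∑ j, fanAdj n i j * (if j = 0 then (2*n : ℤ) else 1) := by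
      simp [Matrix.mulVec, dotProduct]
    rw [hmv]
    by_cases hi : i = 0
    · subst hi
      rw [Finset.sum_congr rfl (fun j _ => fan_key0 n hn j)]
      rw [Finset.sum_sub_distrib, Finset.sum_const, Finset.sum_ite_eq']
      simp
    · have hi0 : i.val ≠ 0 := fun h => hi (Fin.ext h)
      have hii : i.val < 2*n+1 := i.isLt
      have hpv : ∃ pv : ℕ, pv < 2*n+1 ∧
          ((pv = i.val + 1 ∧ i.val % 2 = 1) ∨ (pv = i.val - 1 ∧ i.val % 2 = 0 ∧ 2 ≤ i.val)) := by
        by_cases hpar : i.val % 2 = 1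
        · exact ⟨i.val + 1, by omega, Or.inl ⟨rfl, hpar⟩⟩
        · exact ⟨i.val - 1, by omega, Or.inr ⟨rfl, by omega, by omega⟩⟩
      obtain ⟨pv, hpvlt, hp⟩ := hpv
      rw [Finset.sum_congr rfl (fun j _ => fan_key1 n i ⟨pv, hpvlt⟩ j hi0 hp)]
      rw [Finset.sum_add_distrib, Finset.sum_ite_eq', Finset.sum_ite_eq']
      simp [hi]
end

section
/- Let n ≥ 1 and let (d, r) be an arithmetical structure on the fan graph F_n. Let s and t be positive integers such that s divides r_0 + t, t divides r_0 + s, and r_0 divides s + t. Then the vector r̃ = (r_0, r_1, …, r_{2n}, s, t) together with d̃ given by d̃_0 = d_0 + (s + t)/r_0, d̃_i = d_i for 1 ≤ i ≤ 2n, d̃_{2n+1} = (r_0 + t)/s, d̃_{2n+2} = (r_0 + s)/t, forms an arithmetical structure (d̃, r̃) on the fan graph F_{n+1}. -/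
/-- Adjacency entry of the fan graph as a function of natural number indices. -/
def adjE (J i : ℕ) : ℤ :=
  if (J = 0 ∧ i ≠ 0) ∨ (i = 0 ∧ J ≠ 0)
     ∨ (J % 2 = 1 ∧ i = J + 1)
     ∨ (i % 2 = 1 ∧ J = i + 1) then 1 else 0

lemma fanAdj_eq_adjE (m : ℕ) (i j : Fin (2*m+1)) : fanAdj m i j = adjE i.val j.val := rfl

lemma row_eq (m : ℕ) (dd rr : Fin (2*m+1) → ℤ) (j : Fin (2*m+1)) :
    (Matrix.diagonal dd - fanAdj m).mulVec rr j
      = dd j * rr j - ∑ i ∈ Finset.range (2*m+1),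
          adjE j.val i * (if hi : i < 2*m+1 then rr ⟨i, hi⟩ else 0) := by
  have h1 : (Matrix.diagonal dd - fanAdj m).mulVec rr j
      = (∑ i, Matrix.diagonal dd j i * rr i) - ∑ i, fanAdj m j i * rr i := by
    simp [Matrix.mulVec, dotProduct, Matrix.sub_apply, sub_mul,
      Finset.sum_sub_distrib]
  rw [h1]
  congr 1
  · rw [Finset.sum_eq_single j]
    · simp [Matrix.diagonal_apply_eq]
    · intro b _ hb
      simp [Matrix.diagonal_apply_ne' dd hb]
    · simp
  · rw [← Fin.sum_univ_eq_sum_range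
      (fun i => adjE j.val i * (if hi : i < 2*m+1 then rr ⟨i, hi⟩ else 0)) (2*m+1)]
    apply Finset.sum_congr rfl
    intro i _
    rw [dif_pos i.isLt]
    simp [fanAdj_eq_adjE]

/-- Attaching a new arm with labels `(s, t)` (satisfying `s ∣ r_0 + t`,
`t ∣ r_0 + s`, `r_0 ∣ s + t`) to an arithmetical structure on `F_n` gives an
arithmetical structure on `F_{n+1}`. -/
theorem stmt_9 (n : ℕ) (hn : 1 ≤ n) (d r : Fin (2*n+1) → ℤ)
    (h : IsArithStructure (fanAdj n) d r)
    (s t : ℤ) (hs : 0 < s) (ht : 0 < t)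
    (hst : s ∣ r 0 + t) (hts : t ∣ r 0 + s) (h0 : r 0 ∣ s + t) :
    IsArithStructure (fanAdj (n+1))
      (fun j => if j.val = 0 then d 0 + (s + t) / r 0
        else if hj : j.val ≤ 2*n then d ⟨j.val, by omega⟩
        else if j.val = 2*n + 1 then (r 0 + t) / s
        else (r 0 + s) / t)
      (fun j => if hj : j.val ≤ 2*n then r ⟨j.val, by omega⟩
        else if j.val = 2*n + 1 then s
        else t) := by
  obtain ⟨hd, hr, hg, heq⟩ := h
  have hr0 : 0 < r 0 := hr 0
  refine ⟨?_, ?_, ?_, ?_⟩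
  · -- positivity of d̃
    intro j
    dsimp only
    split_ifs with h1 h2 h3
    · have : 0 < (s + t) / r 0 :=
        Int.ediv_pos_of_pos_of_dvd (by linarith) hr0.le h0
      have := hd 0; linarith
    · exact hd _
    · exact Int.ediv_pos_of_pos_of_dvd (by linarith) hs.le hst
    · exact Int.ediv_pos_of_pos_of_dvd (by linarith) ht.le hts
  · -- positivity of r̃
    intro j
    dsimp only
    split_ifs with h1 h2
    · exact hr _
    · exact hs
    · exact ht
  · -- gcd
    set R := (fun (j : Fin (2*(n+1)+1)) => if hj : j.val ≤ 2*n then r ⟨j.val, by omega⟩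
        else if j.val = 2*n + 1 then s else t) with hR
    have hdvd1 : Finset.univ.gcd R ∣ 1 := by
      rw [← hg]
      apply Finset.dvd_gcd
      intro jj _
      have hdvd := Finset.gcd_dvd
        (Finset.mem_univ (⟨jj.val, by omega⟩ : Fin (2*(n+1)+1))) (f := R)
      have hval : R ⟨jj.val, by omega⟩ = r jj := by
        rw [hR]
        have : jj.val ≤ 2*n := by omega
        simp [this]
      rwa [hval] at hdvd
    have hnn : 0 ≤ Finset.univ.gcd R :=
      Int.nonneg_of_normalize_eq_self Finset.normalize_gcd
    exact Int.eq_one_of_dvd_one hnn hdvd1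
  · -- the linear equation
    have old : ∀ jj : Fin (2*n+1),
        d jj * r jj = ∑ i ∈ Finset.range (2*n+1),
          adjE jj.val i * (if hi : i < 2*n+1 then r ⟨i, hi⟩ else 0) := by
      intro jj
      have := congrFun heq jj
      rw [row_eq] at this
      simp only [Pi.zero_apply] at this
      linarith
    funext j
    rw [row_eq]
    simp only [Pi.zero_apply]
    set R := (fun (j : Fin (2*(n+1)+1)) => if hj : j.val ≤ 2*n then r ⟨j.val, by omega⟩
        else if j.val = 2*n + 1 then s else t) with hR
    have hsplit : ∀ J : ℕ, ∑ i ∈ Finset.range (2*(n+1)+1),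
        adjE J i * (if hi : i < 2*(n+1)+1 then R ⟨i, hi⟩ else 0)
        = (∑ i ∈ Finset.range (2*n+1),
            adjE J i * (if hi : i < 2*n+1 then r ⟨i, hi⟩ else 0))
          + adjE J (2*n+1) * s + adjE J (2*n+2) * t := by
      intro J
      have erange : Finset.range (2*(n+1)+1) = Finset.range ((2*n+1)+1+1) := by
        rw [show 2*(n+1)+1 = (2*n+1)+1+1 by ring]
      rw [erange, Finset.sum_range_succ, Finset.sum_range_succ]
      have v1 : (if hi : 2*n+1 < 2*(n+1)+1 then R ⟨2*n+1, hi⟩ else 0) = s := by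
        rw [dif_pos (by omega)]
        simp only [hR]
        rw [dif_neg (by omega)]
        simp
      have v2 : (if hi : 2*n+1+1 < 2*(n+1)+1 then R ⟨2*n+1+1, hi⟩ else 0) = t := by
        rw [dif_pos (by omega)]
        simp only [hR]
        rw [dif_neg (by omega), if_neg (by omega)]
      rw [v1, v2]
      have ea : 2*n+1+1 = 2*n+2 := by omega
      rw [ea]
      congr 1
      congr 1
      apply Finset.sum_congr rfl
      intro i hi
      rw [Finset.mem_range] at hi
      rw [dif_pos (by omega : i < 2*(n+1)+1), dif_pos hi]
      congr 1
      simp only [hR]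
      rw [dif_pos (by omega : i ≤ 2*n)]
    rw [hsplit]
    rcases Nat.lt_or_ge j.val (2*n+1) with hj | hj
    · rcases Nat.eq_zero_or_pos j.val with hjv | hz
      · -- vertex 0
        simp only [hjv]
        rw [if_pos trivial, dif_pos (Nat.zero_le (2*n))]
        have a1 : adjE 0 (2*n+1) = 1 := by
          unfold adjE; rw [if_pos]; exact Or.inl ⟨rfl, by omega⟩
        have a2 : adjE 0 (2*n+2) = 1 := by
          unfold adjE; rw [if_pos]; exact Or.inl ⟨rfl, by omega⟩
        have hmk : (⟨0, by omega⟩ : Fin (2*n+1)) = 0 := by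
          apply Fin.ext; simp
        rw [hmk, a1, a2]
        have hold : d 0 * r 0 = ∑ i ∈ Finset.range (2*n+1),
            adjE 0 i * (if hi : i < 2*n+1 then r ⟨i, hi⟩ else 0) := by
          have := old 0
          simpa using this
        rw [← hold]
        have hc : (s + t) / r 0 * r 0 = s + t := Int.ediv_mul_cancel h0
        linear_combination hc
      · -- vertices 1..2n
        have hj0 : ¬ j.val = 0 := by omega
        rw [if_neg hj0, dif_pos (show j.val ≤ 2*n by omega),
          dif_pos (show j.val ≤ 2*n by omega)]
        have a1 : adjE j.val (2*n+1) = 0 := by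
          unfold adjE; rw [if_neg]; omega
        have a2 : adjE j.val (2*n+2) = 0 := by
          unfold adjE; rw [if_neg]; omega
        have hold : d ⟨j.val, by omega⟩ * r ⟨j.val, by omega⟩
            = ∑ i ∈ Finset.range (2*n+1),
              adjE j.val i * (if hi : i < 2*n+1 then r ⟨i, hi⟩ else 0) :=
          old ⟨j.val, by omega⟩
        rw [a1, a2, ← hold]
        ring
    · have hsingle : ∀ J : ℕ, (∀ i < 2*n+1, adjE J i = if i = 0 then 1 else 0) →
          (∑ i ∈ Finset.range (2*n+1),
            adjE J i * (if hi : i < 2*n+1 then r ⟨i, hi⟩ else 0)) = r 0 := by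
        intro J hJ
        rw [Finset.sum_eq_single_of_mem 0 (Finset.mem_range.mpr (by omega))]
        · rw [hJ 0 (by omega), if_pos rfl, dif_pos (by omega : 0 < 2*n+1), one_mul]
          exact congrArg r (Fin.ext (by simp))
        · intro b hb hb0
          rw [Finset.mem_range] at hb
          rw [hJ b hb, if_neg hb0, zero_mul]
      rcases Nat.lt_or_ge j.val (2*n+2) with hj2 | hj2
      · -- vertex 2n+1
        have hjv : j.val = 2*n+1 := by omega
        simp only [hjv]
        rw [if_neg (by omega), dif_neg (by omega), if_pos trivial,
          dif_neg (by omega : ¬ 2*n+1 ≤ 2*n), if_pos trivial]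
        have a1 : adjE (2*n+1) (2*n+1) = 0 := by
          unfold adjE; rw [if_neg]; omega
        have a2 : adjE (2*n+1) (2*n+2) = 1 := by
          unfold adjE; rw [if_pos]
          exact Or.inr (Or.inr (Or.inl ⟨by omega, by omega⟩))
        rw [a1, a2, hsingle (2*n+1) (by
          intro i hi; unfold adjE
          by_cases h0 : i = 0
          · rw [if_pos (Or.inr (Or.inl ⟨h0, by omega⟩)), if_pos h0]
          · rw [if_neg (by omega), if_neg h0])]
        have hc : (r 0 + t) / s * s = r 0 + t := Int.ediv_mul_cancel hst
        linarith
      · -- vertex 2n+2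
        have hjv : j.val = 2*n+2 := by omega
        simp only [hjv]
        rw [if_neg (by omega), dif_neg (by omega), if_neg (by omega),
          dif_neg (by omega : ¬ 2*n+2 ≤ 2*n), if_neg (by omega)]
        have a1 : adjE (2*n+2) (2*n+1) = 1 := by
          unfold adjE; rw [if_pos]
          exact Or.inr (Or.inr (Or.inr ⟨by omega, by omega⟩))
        have a2 : adjE (2*n+2) (2*n+2) = 0 := by
          unfold adjE; rw [if_neg]; omega
        rw [a1, a2, hsingle (2*n+2) (by
          intro i hi; unfold adjE
          by_cases h0 : i = 0
          · rw [if_pos (Or.inr (Or.inl ⟨h0, by omega⟩)), if_pos h0]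
          · rw [if_neg (by omega), if_neg h0])]
        have hc : (r 0 + s) / t * t = r 0 + s := Int.ediv_mul_cancel hts
        linarith
end

section
/- Let n ≥ 2 and let (d, r) be an arithmetical structure on the fan graph F_n such that r_0 divides r_{2n−1} + r_{2n}. Define the truncated vectors r' = (r_0, r_1, …, r_{2n−2}) and d' by d'_0 = d_0 − (r_{2n−1} + r_{2n})/r_0 and d'_i = d_i for 1 ≤ i ≤ 2n−2. Then d' is a vector of positive integers and (diag(d') − A(F_{n−1}))·r' = 0; that is, removing the last arm of F_n yields a positive integer solution of the defining equation on F_{n−1}. -/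
lemma sum_ite_val {N : ℕ} (c : ℕ) (hc : c < N) (f : Fin N → ℤ) :
    (∑ j : Fin N, if j.val = c then f j else 0) = f ⟨c, hc⟩ := by
  rw [Finset.sum_eq_single (⟨c, hc⟩ : Fin N)]
  · simp
  · intro b _ hb
    have : b.val ≠ c := fun h => hb (Fin.ext h)
    simp [this]
  · simp

lemma fan_row_zero_s10 (m : ℕ) (i : Fin (2*m+1)) (hi : i.val = 0) (h0 : 0 < 2*m+1)
    (f : Fin (2*m+1) → ℤ) :
    ∑ j, fanAdj m i j * f j = (∑ j, f j) - f ⟨0, h0⟩ := by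
  have h : ∀ j : Fin (2*m+1), fanAdj m i j * f j
      = f j - (if j.val = 0 then f j else 0) := by
    intro j
    simp only [fanAdj, Matrix.of_apply]
    split_ifs <;> first | ring1 | omega
  rw [Finset.sum_congr rfl (fun j _ => h j), Finset.sum_sub_distrib,
    sum_ite_val 0 h0 f]

lemma fan_row_odd_s10 (m : ℕ) (i : Fin (2*m+1)) (hi : i.val % 2 = 1) (h0 : 0 < 2*m+1)
    (hlt : i.val + 1 < 2*m+1) (f : Fin (2*m+1) → ℤ) :
    ∑ j, fanAdj m i j * f j = f ⟨0, h0⟩ + f ⟨i.val+1, hlt⟩ := by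
  have h : ∀ j : Fin (2*m+1), fanAdj m i j * f j
      = (if j.val = 0 then f j else 0) + (if j.val = i.val+1 then f j else 0) := by
    intro j
    simp only [fanAdj, Matrix.of_apply]
    split_ifs <;> first | ring1 | omega
  rw [Finset.sum_congr rfl (fun j _ => h j), Finset.sum_add_distrib,
    sum_ite_val 0 h0 f, sum_ite_val (i.val+1) hlt f]

lemma fan_row_even_s10 (m : ℕ) (i : Fin (2*m+1)) (hi : i.val % 2 = 0) (h0' : i.val ≠ 0)
    (h0 : 0 < 2*m+1) (hm : i.val - 1 < 2*m+1) (f : Fin (2*m+1) → ℤ) :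
    ∑ j, fanAdj m i j * f j = f ⟨0, h0⟩ + f ⟨i.val-1, hm⟩ := by
  have h : ∀ j : Fin (2*m+1), fanAdj m i j * f j
      = (if j.val = 0 then f j else 0) + (if j.val = i.val-1 then f j else 0) := by
    intro j
    simp only [fanAdj, Matrix.of_apply]
    split_ifs <;> first | ring1 | omega
  rw [Finset.sum_congr rfl (fun j _ => h j), Finset.sum_add_distrib,
    sum_ite_val 0 h0 f, sum_ite_val (i.val-1) hm f]

/-- Truncation of a vector on `F_n` to `F_{n-1}`. -/
def truncR (n : ℕ) (r : Fin (2*n+1) → ℤ) : Fin (2*(n-1)+1) → ℤ :=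
  fun i => r ⟨i.val, by have := i.isLt; omega⟩

/-- Truncation of a `d`-vector, subtracting `q` at the hub. -/
def truncD (n : ℕ) (d : Fin (2*n+1) → ℤ) (q : ℤ) : Fin (2*(n-1)+1) → ℤ :=
  fun i => if i.val = 0 then d 0 - q else d ⟨i.val, by have := i.isLt; omega⟩

lemma truncR_mk (n : ℕ) (r : Fin (2*n+1) → ℤ) (k : ℕ) (hk : k < 2*(n-1)+1)
    (hk' : k < 2*n+1) : truncR n r ⟨k, hk⟩ = r ⟨k, hk'⟩ := rfl

lemma truncR_app (n : ℕ) (r : Fin (2*n+1) → ℤ) (i : Fin (2*(n-1)+1))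
    (hk' : i.val < 2*n+1) : truncR n r i = r ⟨i.val, hk'⟩ := rfl

lemma truncD_zero (n : ℕ) (d : Fin (2*n+1) → ℤ) (q : ℤ) (i : Fin (2*(n-1)+1))
    (hi : i.val = 0) : truncD n d q i = d 0 - q := by
  simp [truncD, hi]

lemma truncD_ne (n : ℕ) (d : Fin (2*n+1) → ℤ) (q : ℤ) (i : Fin (2*(n-1)+1))
    (hi : i.val ≠ 0) (hk' : i.val < 2*n+1) : truncD n d q i = d ⟨i.val, hk'⟩ := by
  simp only [truncD, if_neg hi]

lemma mk_zero_eq {N : ℕ} [NeZero N] (hN : 0 < N) : (⟨0, hN⟩ : Fin N) = 0 := by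
  ext
  simp

lemma sum_range_add_two (g : ℕ → ℤ) (m k : ℕ) (hk : k = m + 2) :
    ∑ i ∈ Finset.range k, g i
      = (∑ i ∈ Finset.range m, g i) + g m + g (m+1) := by
  subst hk
  rw [Finset.sum_range_succ, Finset.sum_range_succ]

lemma main_aux (n : ℕ) (hn : 2 ≤ n) (d r : Fin (2*n+1) → ℤ) (q : ℤ)
    (hA : 2*n - 1 < 2*n+1) (hB : 2*n < 2*n+1)
    (h : IsArithStructure (fanAdj n) d r)
    (hq : r 0 * q = r ⟨2*n - 1, hA⟩ + r ⟨2*n, hB⟩) :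
    (∀ i : Fin (2*(n-1)+1), 0 < truncD n d q i) ∧
    (Matrix.diagonal (truncD n d q) - fanAdj (n-1)).mulVec (truncR n r) = 0 := by
  obtain ⟨hd, hr, -, heq⟩ := h
  have h0N : 0 < 2*n+1 := by omega
  have h0M : 0 < 2*(n-1)+1 := by omega
  have key : ∀ i : Fin (2*n+1), d i * r i = ∑ j, fanAdj n i j * r j := by
    intro i
    have h1 := congrFun heq i
    rw [Matrix.sub_mulVec, Pi.sub_apply, Matrix.mulVec_diagonal] at h1
    simp only [Matrix.mulVec, dotProduct, Pi.zero_apply] at h1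
    linarith
  have hv0 : (0 : Fin (2*n+1)).val = 0 := by simp
  have hsplit : (∑ j : Fin (2*n+1), r j)
      = (∑ j : Fin (2*(n-1)+1), truncR n r j) + r ⟨2*n-1, hA⟩ + r ⟨2*n, hB⟩ := by
    have h1 : ∑ j : Fin (2*n+1), r j
        = ∑ k ∈ Finset.range (2*n+1), (fun k => if hk : k < 2*n+1 then r ⟨k, hk⟩ else 0) k := by
      rw [← Fin.sum_univ_eq_sum_range]
      exact Finset.sum_congr rfl fun j _ => by simp [j.isLt]
    have h2 : ∑ j : Fin (2*(n-1)+1), truncR n r j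
        = ∑ k ∈ Finset.range (2*(n-1)+1),
            (fun k => if hk : k < 2*n+1 then r ⟨k, hk⟩ else 0) k := by
      rw [← Fin.sum_univ_eq_sum_range]
      refine Finset.sum_congr rfl fun j _ => ?_
      have hj : (j : ℕ) < 2*n+1 := by have := j.isLt; omega
      rw [truncR_app n r j hj]
      simp only [dif_pos hj]
    have h3 := sum_range_add_two (fun k => if hk : k < 2*n+1 then r ⟨k, hk⟩ else 0)
      (2*(n-1)+1) (2*n+1) (by omega)
    have hc4 : 2*(n-1)+1 < 2*n+1 := by omega
    have hc5 : 2*(n-1)+1+1 < 2*n+1 := by omega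
    have h4 : (fun k => if hk : k < 2*n+1 then r ⟨k, hk⟩ else 0) (2*(n-1)+1)
        = r ⟨2*n-1, hA⟩ := by
      show (if hk : 2*(n-1)+1 < 2*n+1 then r ⟨2*(n-1)+1, hk⟩ else 0) = _
      rw [dif_pos hc4]
      exact congrArg r (Fin.mk_eq_mk.mpr (by omega))
    have h5 : (fun k => if hk : k < 2*n+1 then r ⟨k, hk⟩ else 0) (2*(n-1)+1+1)
        = r ⟨2*n, hB⟩ := by
      show (if hk : 2*(n-1)+1+1 < 2*n+1 then r ⟨2*(n-1)+1+1, hk⟩ else 0) = _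
      rw [dif_pos hc5]
      exact congrArg r (Fin.mk_eq_mk.mpr (by omega))
    linarith [h1, h2, h3, h4, h5]
  have eqs : ∀ i : Fin (2*(n-1)+1),
      truncD n d q i * truncR n r i = ∑ j, fanAdj (n-1) i j * truncR n r j := by
    intro i
    have hiv : i.val < 2*n+1 := by have := i.isLt; omega
    rcases Nat.eq_zero_or_pos i.val with hi0 | hipos
    · rw [fan_row_zero_s10 (n-1) i hi0 h0M (truncR n r)]
      have k0 := key 0
      rw [fan_row_zero_s10 n 0 hv0 h0N r] at k0
      rw [mk_zero_eq h0N] at k0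
      rw [truncD_zero n d q i hi0, truncR_app n r i hiv,
        truncR_mk n r 0 h0M h0N, mk_zero_eq h0N]
      have hie : (⟨i.val, hiv⟩ : Fin (2*n+1)) = 0 := by
        ext
        simp [hi0]
      rw [hie, sub_mul, k0, hsplit]
      linarith [hq]
    · have hne : i.val ≠ 0 := by omega
      rcases Nat.even_or_odd i.val with he | ho
      · have hie : i.val % 2 = 0 := Nat.even_iff.mp he
        have hm : i.val - 1 < 2*n+1 := by omega
        have hm' : i.val - 1 < 2*(n-1)+1 := by have := i.isLt; omega
        have k := key ⟨i.val, hiv⟩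
        rw [fan_row_even_s10 n ⟨i.val, hiv⟩ hie hne h0N hm r] at k
        rw [fan_row_even_s10 (n-1) i hie hne h0M hm' (truncR n r)]
        rw [truncD_ne n d q i hne hiv, truncR_app n r i hiv,
          truncR_mk n r 0 h0M h0N, truncR_mk n r (i.val-1) hm' hm]
        exact k
      · have hio : i.val % 2 = 1 := Nat.odd_iff.mp ho
        have hlt : i.val + 1 < 2*(n-1)+1 := by have := i.isLt; omega
        have hlt' : i.val + 1 < 2*n+1 := by omega
        have k := key ⟨i.val, hiv⟩
        rw [fan_row_odd_s10 n ⟨i.val, hiv⟩ hio h0N hlt' r] at k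
        rw [fan_row_odd_s10 (n-1) i hio h0M hlt (truncR n r)]
        rw [truncD_ne n d q i hne hiv, truncR_app n r i hiv,
          truncR_mk n r 0 h0M h0N, truncR_mk n r (i.val+1) hlt hlt']
        exact k
  constructor
  · intro i
    rcases Nat.eq_zero_or_pos i.val with hi0 | hipos
    · have e0 := eqs i
      rw [fan_row_zero_s10 (n-1) i hi0 h0M (truncR n r)] at e0
      rw [truncD_zero n d q i hi0] at e0 ⊢
      rw [mk_zero_eq h0M] at e0
      have hieq : i = 0 := by
        ext
        simp [hi0]
      rw [hieq] at e0
      have hpos : 0 < (∑ j : Fin (2*(n-1)+1), truncR n r j) - truncR n r 0 := by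
        rw [Fin.sum_univ_succ]
        have hsum : 0 < ∑ j : Fin (2*(n-1)), truncR n r j.succ := by
          apply Finset.sum_pos
          · intro j _
            exact hr _
          · exact ⟨⟨0, by omega⟩, Finset.mem_univ _⟩
        linarith
      have hrp : 0 < truncR n r 0 := hr _
      nlinarith [e0, hpos, hrp]
    · rw [truncD_ne n d q i (by omega) (by have := i.isLt; omega)]
      exact hd _
  · funext i
    rw [Pi.zero_apply, Matrix.sub_mulVec, Pi.sub_apply, Matrix.mulVec_diagonal]
    simp only [Matrix.mulVec, dotProduct]
    linarith [eqs i]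


/-- Removing the last arm of an arithmetical structure on `F_n` (when
`r_0 ∣ r_{2n-1} + r_{2n}`) gives a positive integer solution of the defining
equation on `F_{n-1}`. -/
theorem stmt_10 (n : ℕ) (hn : 2 ≤ n) (d r : Fin (2*n+1) → ℤ)
    (h : IsArithStructure (fanAdj n) d r)
    (hdiv : r 0 ∣ r ⟨2*n - 1, by omega⟩ + r ⟨2*n, by omega⟩) :
    (∀ i : Fin (2*(n-1)+1),
      0 < (if i.val = 0 then
            d 0 - (r ⟨2*n - 1, by omega⟩ + r ⟨2*n, by omega⟩) / r 0
          else d ⟨i.val, by have := i.isLt; omega⟩)) ∧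
    (Matrix.diagonal (fun i : Fin (2*(n-1)+1) =>
        if i.val = 0 then
          d 0 - (r ⟨2*n - 1, by omega⟩ + r ⟨2*n, by omega⟩) / r 0
        else d ⟨i.val, by have := i.isLt; omega⟩)
      - fanAdj (n-1)).mulVec
      (fun i : Fin (2*(n-1)+1) => r ⟨i.val, by have := i.isLt; omega⟩) = 0 := by
  have hA : 2*n - 1 < 2*n+1 := by omega
  have hB : 2*n < 2*n+1 := by omega
  have hq : r 0 * ((r ⟨2*n - 1, hA⟩ + r ⟨2*n, hB⟩) / r 0)
      = r ⟨2*n - 1, hA⟩ + r ⟨2*n, hB⟩ := Int.mul_ediv_cancel' hdiv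
  exact main_aux n hn d r _ hA hB h hq
end

section
/- Let n ≥ 1 and let r = (r_0, r_1, …, r_n) be a vector of positive integers whose entries have greatest common divisor 1. Then r is an arithmetical r-structure on the star graph S_n (i.e., there exists a vector d of positive integers with (diag(d) − A(S_n))·r = 0) if and only if r_i divides r_0 for every 1 ≤ i ≤ n and r_0 divides r_1 + r_2 + ⋯ + r_n. -/
/-- Adjacency matrix of the star graph `S_n` on vertices `{0, 1, …, n}` with
center `0`. -/
def starAdj (n : ℕ) : Matrix (Fin (n+1)) (Fin (n+1)) ℤ :=
  Matrix.of fun i j =>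
    if (i.val = 0 ∧ j.val ≠ 0) ∨ (j.val = 0 ∧ i.val ≠ 0) then 1 else 0

lemma ediv_pos_of_dvd {a b : ℤ} (h : a ∣ b) (ha : 0 < a) (hb : 0 < b) : 0 < b / a := by
  obtain ⟨k, rfl⟩ := h
  rw [Int.mul_ediv_cancel_left _ ha.ne']
  nlinarith

lemma star_mulVec (n : ℕ) (d r : Fin (n+1) → ℤ) (i : Fin (n+1)) :
    ((Matrix.diagonal d - starAdj n).mulVec r) i
      = d i * r i - (if i = 0 then
          ∑ j ∈ Finset.univ.filter (fun j : Fin (n+1) => j ≠ 0), r j else r 0) := by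
  have ha : ∀ j, starAdj n i j * r j
      = if i = 0 then (if j = 0 then 0 else r j) else (if j = (0 : Fin (n+1)) then r 0 else 0) := by
    intro j
    simp only [starAdj, Matrix.of_apply]
    by_cases hi : i = 0 <;> by_cases hj : j = (0 : Fin (n+1))
    · subst hi; subst hj; simp
    · have hvj : j.val ≠ 0 := by intro h; exact hj (Fin.ext (by simpa using h))
      subst hi; simp [hvj, hj]
    · have hvi : i.val ≠ 0 := by intro h; exact hi (Fin.ext (by simpa using h))
      subst hj; simp [hvi, hi]
    · have hvi : i.val ≠ 0 := by intro h; exact hi (Fin.ext (by simpa using h))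
      have hvj : j.val ≠ 0 := by intro h; exact hj (Fin.ext (by simpa using h))
      simp [hvi, hvj, hi, hj]
  rw [Matrix.sub_mulVec, Pi.sub_apply, Matrix.mulVec_diagonal]
  congr 1
  simp only [Matrix.mulVec, dotProduct]
  rw [Finset.sum_congr rfl (fun j _ => ha j)]
  by_cases hi : i = 0
  · subst hi
    simp only [↓reduceIte, Finset.sum_filter]
    exact Finset.sum_congr rfl fun j _ => by by_cases hj : j = (0:Fin (n+1)) <;> simp [hj]
  · simp only [if_neg hi]
    simp [Finset.sum_ite_eq']

/-- `r` (positive with gcd 1) is an arithmetical r-structure on `S_n` iff each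
`r_i` divides `r_0` and `r_0` divides the sum of the other entries. -/
theorem stmt_11 (n : ℕ) (hn : 1 ≤ n) (r : Fin (n+1) → ℤ)
    (hr : ∀ i, 0 < r i) (hg : Finset.univ.gcd r = 1) :
    (∃ d : Fin (n+1) → ℤ, (∀ i, 0 < d i) ∧
      (Matrix.diagonal d - starAdj n).mulVec r = 0) ↔
    ((∀ i : Fin (n+1), i ≠ 0 → r i ∣ r 0) ∧
      r 0 ∣ ∑ i ∈ Finset.univ.filter (fun i : Fin (n+1) => i ≠ 0), r i) := by
  constructor
  · rintro ⟨d, hd, heq⟩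
    constructor
    · intro i hi
      have h := congrFun heq i
      rw [star_mulVec, if_neg hi, Pi.zero_apply, sub_eq_zero] at h
      exact ⟨d i, by rw [← h]; ring⟩
    · have h := congrFun heq 0
      rw [star_mulVec, if_pos rfl, Pi.zero_apply, sub_eq_zero] at h
      exact ⟨d 0, by rw [← h]; ring⟩
  · rintro ⟨hdvd, hsum⟩
    have hSpos : 0 < ∑ i ∈ Finset.univ.filter (fun i : Fin (n+1) => i ≠ 0), r i := by
      apply Finset.sum_pos (fun i _ => hr i)
      refine ⟨⟨1, by omega⟩, ?_⟩
      exact Finset.mem_filter.mpr ⟨Finset.mem_univ _, fun h => absurd (congrArg Fin.val h) (by simp)⟩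
    refine ⟨fun i => if i = 0 then
        (∑ i ∈ Finset.univ.filter (fun i : Fin (n+1) => i ≠ 0), r i) / r 0
      else r 0 / r i, fun i => ?_, ?_⟩
    · by_cases hi : i = 0
      · simpa [hi] using ediv_pos_of_dvd hsum (hr 0) hSpos
      · simpa [hi] using ediv_pos_of_dvd (hdvd i hi) (hr i) (hr 0)
    · funext i
      rw [star_mulVec, Pi.zero_apply, sub_eq_zero]
      by_cases hi : i = 0
      · subst hi
        simp only [↓reduceIte]
        exact Int.ediv_mul_cancel hsum
      · simp only [if_neg hi]
        exact Int.ediv_mul_cancel (hdvd i hi)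
end

section
/- Let m ≥ 1 and let (d, r) be an arithmetical structure on the star graph S_m. Define vectors d̃ and r̃ indexed by {0, 1, …, m+1} by: d̃_0 = d_0 + 1, d̃_i = d_i for 1 ≤ i ≤ m, d̃_{m+1} = 1; and r̃_i = r_i for 0 ≤ i ≤ m, r̃_{m+1} = r_0. Then (d̃, r̃) is an arithmetical structure on the star graph S_{m+1}. -/
/-- Extending an arithmetical structure on `S_m` by a new leaf with
`d̃_{m+1} = 1`, `r̃_{m+1} = r_0` and `d̃_0 = d_0 + 1` gives an arithmetical
structure on `S_{m+1}`. -/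
theorem stmt_13 (m : ℕ) (hm : 1 ≤ m) (d r : Fin (m+1) → ℤ)
    (h : IsArithStructure (starAdj m) d r) :
    IsArithStructure (starAdj (m+1))
      (fun j : Fin (m+1+1) => if j.val = 0 then d 0 + 1
        else if hj : j.val ≤ m then d ⟨j.val, by omega⟩ else 1)
      (fun j : Fin (m+1+1) => if hj : j.val ≤ m then r ⟨j.val, by omega⟩
        else r 0) := by
  obtain ⟨hd, hr, hg, hM⟩ := h
  have hMe : ∀ i : Fin (m+1), (∑ j, (Matrix.diagonal d - starAdj m) i j * r j) = 0 := by
    intro i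
    have := congrFun hM i
    simpa [Matrix.mulVec, dotProduct] using this
  have hsum0 : (∑ x : Fin (m+1), if (x : ℕ) = 0 then r 0 else (0:ℤ)) = r 0 := by
    have he : ∀ x : Fin (m+1), (if (x : ℕ) = 0 then r 0 else (0:ℤ))
        = if x = 0 then r 0 else 0 := by
      intro x; simp only [Fin.ext_iff, Fin.val_zero]
    rw [Finset.sum_congr rfl (fun x _ => he x)]
    simp
  refine ⟨?_, ?_, ?_, ?_⟩
  · intro i
    dsimp only
    split_ifs with h1 h2
    · linarith [hd 0]
    · exact hd _
    · norm_num
  · intro i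
    dsimp only
    split_ifs <;> exact hr _
  · have hdvd : (Finset.univ.gcd (fun j : Fin (m+1+1) =>
        if hj : j.val ≤ m then r ⟨j.val, by omega⟩ else r 0)) ∣ Finset.univ.gcd r := by
      apply Finset.dvd_gcd
      intro i _
      have := Finset.gcd_dvd (s := (Finset.univ : Finset (Fin (m+1+1))))
        (f := fun j : Fin (m+1+1) => if hj : j.val ≤ m then r ⟨j.val, by omega⟩ else r 0)
        (Finset.mem_univ (Fin.castSucc i))
      simpa [Nat.lt_succ_iff.mp i.isLt] using this
    rw [hg] at hdvd
    rw [← Finset.normalize_gcd]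
    exact normalize_eq_one.mpr (isUnit_of_dvd_one hdvd)
  · funext i
    simp only [Matrix.mulVec, dotProduct, Pi.zero_apply]
    induction i using Fin.lastCases with
    | last =>
      rw [Fin.sum_univ_castSucc]
      have h1 : ∀ j : Fin (m+1),
          (Matrix.diagonal (fun j : Fin (m+1+1) => if j.val = 0 then d 0 + 1
            else if hj : j.val ≤ m then d ⟨j.val, by omega⟩ else 1) - starAdj (m+1))
            (Fin.last (m+1)) (Fin.castSucc j) *
          (if hj : (Fin.castSucc j).val ≤ m then r ⟨(Fin.castSucc j).val, by omega⟩ else r 0)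
          = -(if (j : ℕ) = 0 then r 0 else 0) := by
        intro j
        have hne : Fin.last (m+1) ≠ Fin.castSucc j := by
          intro hh
          rw [Fin.ext_iff] at hh
          have := j.isLt
          simp only [Fin.val_last, Fin.coe_castSucc] at hh
          omega
        by_cases hj0 : (j : ℕ) = 0
        · have hj : j = 0 := Fin.ext hj0
          subst hj
          simp [Matrix.diagonal_apply_ne _ hne, starAdj]
        · simp [Matrix.diagonal_apply_ne _ hne, starAdj, hj0, Nat.lt_succ_iff.mp j.isLt,
            show j ≠ 0 from fun h => hj0 (by subst h; rfl)]
      rw [Finset.sum_congr rfl (fun j _ => h1 j)]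
      rw [Finset.sum_neg_distrib, hsum0]
      have : (m : ℤ) ≥ 0 := by positivity
      simp [Matrix.diagonal, starAdj, Fin.val_last]
    | cast i =>
      rw [Fin.sum_univ_castSucc]
      by_cases hi0 : i = 0
      · subst hi0
        have h1 : ∀ j : Fin (m+1),
            (Matrix.diagonal (fun j : Fin (m+1+1) => if j.val = 0 then d 0 + 1
              else if hj : j.val ≤ m then d ⟨j.val, by omega⟩ else 1) - starAdj (m+1))
              (Fin.castSucc 0) (Fin.castSucc j) *
            (if hj : (Fin.castSucc j).val ≤ m then r ⟨(Fin.castSucc j).val, by omega⟩ else r 0)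
            = (Matrix.diagonal d - starAdj m) 0 j * r j + (if (j : ℕ) = 0 then r 0 else 0) := by
          intro j
          by_cases hj0 : (j : ℕ) = 0
          · have hj : j = 0 := Fin.ext hj0
            subst hj
            simp [Matrix.diagonal, starAdj]
            ring
          · have hj0' : ¬ (0 = (j : ℕ)) := fun hh => hj0 hh.symm
            simp [Matrix.diagonal, starAdj, hj0, hj0', Nat.lt_succ_iff.mp j.isLt, Fin.ext_iff, -Fin.val_eq_zero_iff]
        rw [Finset.sum_congr rfl (fun j _ => h1 j), Finset.sum_add_distrib, hMe 0, hsum0]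
        simp [Matrix.diagonal, starAdj, Fin.ext_iff, -Fin.val_eq_zero_iff]
      · have hiv : (i : ℕ) ≠ 0 := fun hh => hi0 (Fin.ext hh)
        have h1 : ∀ j : Fin (m+1),
            (Matrix.diagonal (fun j : Fin (m+1+1) => if j.val = 0 then d 0 + 1
              else if hj : j.val ≤ m then d ⟨j.val, by omega⟩ else 1) - starAdj (m+1))
              (Fin.castSucc i) (Fin.castSucc j) *
            (if hj : (Fin.castSucc j).val ≤ m then r ⟨(Fin.castSucc j).val, by omega⟩ else r 0)
            = (Matrix.diagonal d - starAdj m) i j * r j := by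
          intro j
          simp [Matrix.diagonal, starAdj, Nat.lt_succ_iff.mp j.isLt,
            Nat.lt_succ_iff.mp i.isLt, Fin.ext_iff, hiv, -Fin.val_eq_zero_iff]
        rw [Finset.sum_congr rfl (fun j _ => h1 j), hMe i]
        simp [Matrix.diagonal, starAdj, Fin.ext_iff, Fin.val_last, hiv, -Fin.val_eq_zero_iff]
        all_goals omega
end

section
/- Let n ≥ 2 and let (d, r) be an arithmetical structure on the complete graph K_n, i.e., d = (d_1, …, d_n) and r = (r_1, …, r_n) are vectors of positive integers with gcd of the entries of r equal to 1 and (diag(d) − A(K_n))·r = 0. Define d̃ and r̃ indexed by {0, 1, …, n} by: d̃_0 = 1 and d̃_i = d_i + 1 for 1 ≤ i ≤ n; r̃_0 = r_1 + r_2 + ⋯ + r_n and r̃_i = r_i for 1 ≤ i ≤ n. Then (d̃, r̃) is an arithmetical structure on the star graph S_n. -/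
/-- Adjacency matrix of the complete graph `K_n` on vertices `{0, …, n-1}`. -/
def completeAdj (n : ℕ) : Matrix (Fin n) (Fin n) ℤ :=
  Matrix.of fun i j => if i ≠ j then 1 else 0

/-- The clique-star transform of an arithmetical structure on `K_n` is an
arithmetical structure on `S_n`: the new center `0` gets `d̃_0 = 1` and
`r̃_0 = ∑ r_i`, while each old vertex `i` gets `d̃_i = d_i + 1`, `r̃_i = r_i`. -/
theorem stmt_14 (n : ℕ) (hn : 2 ≤ n) (d r : Fin n → ℤ)
    (h : IsArithStructure (completeAdj n) d r) :
    IsArithStructure (starAdj n)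
      (fun j : Fin (n+1) => if hj : j.val = 0 then 1
        else d ⟨j.val - 1, by have := j.isLt; omega⟩ + 1)
      (fun j : Fin (n+1) => if hj : j.val = 0 then ∑ i, r i
        else r ⟨j.val - 1, by have := j.isLt; omega⟩) := by
  obtain ⟨hd, hr, hgcd, heq⟩ := h
  have key : ∀ i : Fin n, (d i + 1) * r i = ∑ j, r j := by
    intro i
    have h0 := congrFun heq i
    simp only [Matrix.mulVec, dotProduct, Matrix.sub_apply, Matrix.diagonal_apply,
      completeAdj, Matrix.of_apply, Pi.zero_apply, sub_mul, ite_mul, one_mul, zero_mul,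
      Finset.sum_sub_distrib] at h0
    rw [Finset.sum_ite_eq] at h0
    simp only [Finset.mem_univ, if_true] at h0
    have h1 : (∑ x, if i ≠ x then r x else 0) = (∑ x, r x) - r i := by
      have : ∀ x : Fin n, (if i ≠ x then r x else 0) = r x - (if i = x then r x else 0) := by
        intro x; by_cases hx : i = x <;> simp [hx]
      rw [Finset.sum_congr rfl (fun x _ => this x), Finset.sum_sub_distrib,
        Finset.sum_ite_eq]
      simp
    rw [h1] at h0
    linarith
  set dd : Fin (n+1) → ℤ := fun j : Fin (n+1) => if hj : j.val = 0 then 1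
        else d ⟨j.val - 1, by have := j.isLt; omega⟩ + 1 with hdd
  set rt : Fin (n+1) → ℤ := fun j : Fin (n+1) => if hj : j.val = 0 then ∑ i, r i
        else r ⟨j.val - 1, by have := j.isLt; omega⟩ with hrt
  have hsumpos : 0 < ∑ i, r i := by
    apply Finset.sum_pos (fun i _ => hr i)
    exact Finset.univ_nonempty_iff.mpr ⟨⟨0, by omega⟩⟩
  have hrt0 : rt 0 = ∑ i, r i := by simp [hrt]
  have hrt_succ : ∀ i : Fin n, rt i.succ = r i := by
    intro i
    simp only [hrt, Fin.val_succ]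
    rw [dif_neg (by omega)]
    congr 1
  have hdd0 : dd 0 = 1 := by simp [hdd]
  have hdd_succ : ∀ i : Fin n, dd i.succ = d i + 1 := by
    intro i
    simp only [hdd, Fin.val_succ]
    rw [dif_neg (by omega)]
    congr 2
  have hA : ∀ j k : Fin (n+1), (Matrix.diagonal dd - starAdj n) j k
      = (if j = k then dd j else 0)
        - (if (j.val = 0 ∧ k.val ≠ 0) ∨ (k.val = 0 ∧ j.val ≠ 0) then 1 else 0) := by
    intro j k
    simp [Matrix.sub_apply, Matrix.diagonal_apply, starAdj]
  refine ⟨?_, ?_, ?_, ?_⟩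
  · intro i
    simp only [hdd]
    split
    · norm_num
    · have := hd ⟨i.val - 1, by have := i.isLt; omega⟩; linarith
  · intro i
    simp only [hrt]
    split
    · exact hsumpos
    · exact hr _
  · have hdvd : Finset.univ.gcd rt ∣ 1 := by
      rw [← hgcd]
      refine Finset.dvd_gcd fun i _ => ?_
      have := Finset.gcd_dvd (Finset.mem_univ i.succ) (f := rt)
      rwa [hrt_succ i] at this
    have hnorm : normalize (Finset.univ.gcd rt) = Finset.univ.gcd rt := Finset.normalize_gcd
    rw [← hnorm]
    exact normalize_eq_one.mpr (isUnit_of_dvd_one hdvd)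
  · funext j
    rw [Pi.zero_apply]
    simp only [Matrix.mulVec, dotProduct, hA]
    rw [Fin.sum_univ_succ]
    by_cases hj : j.val = 0
    · have hj0 : j = 0 := Fin.ext hj
      subst hj0
      simp only [hrt0, hdd0, hrt_succ, Fin.val_succ, Fin.val_zero, Fin.ext_iff]
      norm_num
    · obtain ⟨i0, rfl⟩ : ∃ i0 : Fin n, j = i0.succ := by
        refine ⟨⟨j.val - 1, by have := j.isLt; omega⟩, Fin.ext ?_⟩
        simp [Fin.val_succ]; omega
      simp only [hrt0, hdd_succ, hrt_succ, Fin.val_succ, Fin.val_zero, Fin.ext_iff, Fin.succ_inj]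
      norm_num
      simp only [Fin.val_inj]
      rw [Finset.sum_ite_eq]
      simp only [Finset.mem_univ, if_true]
      rw [key i0]
      ring
end

section
/- Let n ≥ 1, let k satisfy 1 ≤ k ≤ n, and let G' be the graph obtained from the star graph S_n by adding a new vertex n+1 joined by a single edge to the leaf vertex k (so the adjacency matrix A(G') agrees with A(S_n) on {0,…,n} and additionally has A(G')[k][n+1] = A(G')[n+1][k] = 1, all other new entries 0). If (d, r) is an arithmetical structure on S_n, then the vectors d̃ and r̃ indexed by {0, …, n+1} given by d̃_{n+1} = 1, d̃_k = d_k + 1, d̃_i = d_i otherwise, and r̃_{n+1} = r_k, r̃_i = r_i otherwise, form an arithmetical structure on G'. -/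
/-- Adjacency matrix of the graph obtained from the star graph `S_n`
(vertices `{0, …, n}`, center `0`) by attaching a new pendant vertex `n+1`
to the leaf `k`. -/
def starPendAdj (n k : ℕ) : Matrix (Fin (n+2)) (Fin (n+2)) ℤ :=
  Matrix.of fun i j =>
    if (i.val = 0 ∧ j.val ≠ 0 ∧ j.val ≤ n) ∨ (j.val = 0 ∧ i.val ≠ 0 ∧ i.val ≤ n)
       ∨ (i.val = k ∧ j.val = n+1) ∨ (j.val = k ∧ i.val = n+1) then 1 else 0

/-- Adding a pendant edge at the leaf `k` of `S_n` turns an arithmetical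
structure on `S_n` into one on the new graph: the new vertex gets `d̃ = 1`,
`r̃ = r_k`, and `d̃_k = d_k + 1`. -/
theorem stmt_15 (n k : ℕ) (hn : 1 ≤ n) (hk1 : 1 ≤ k) (hk2 : k ≤ n)
    (d r : Fin (n+1) → ℤ) (h : IsArithStructure (starAdj n) d r) :
    IsArithStructure (starPendAdj n k)
      (fun j : Fin (n+2) => if hj : j.val = n+1 then 1
        else if j.val = k then d ⟨k, by omega⟩ + 1
        else d ⟨j.val, by have := j.isLt; omega⟩)
      (fun j : Fin (n+2) => if hj : j.val = n+1 then r ⟨k, by omega⟩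
        else r ⟨j.val, by have := j.isLt; omega⟩) := by
  obtain ⟨hd, hr, hgcd, heq⟩ := h
  have key : ∀ i : Fin (n+1), d i * r i = ∑ j, starAdj n i j * r j := by
    intro i
    have h2 := congrFun heq i
    rw [Matrix.sub_mulVec, Pi.sub_apply, Matrix.mulVec_diagonal, Pi.zero_apply,
      sub_eq_zero] at h2
    simpa [Matrix.mulVec, dotProduct] using h2
  have hA : ∀ (a b : Fin (n+1)), starPendAdj n k a.castSucc b.castSucc = starAdj n a b := by
    intro a b
    have ha := a.isLt; have hb := b.isLt
    simp only [starPendAdj, starAdj, Matrix.of_apply, Fin.coe_castSucc]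
    refine if_congr ⟨fun h => ?_, fun h => ?_⟩ rfl rfl <;> first | omega | tauto
  have hAlast : ∀ (a : Fin (n+1)), starPendAdj n k a.castSucc (Fin.last (n+1))
      = if a.val = k then 1 else 0 := by
    intro a
    have ha := a.isLt
    simp only [starPendAdj, Matrix.of_apply, Fin.coe_castSucc, Fin.val_last]
    refine if_congr ⟨fun h => ?_, fun h => ?_⟩ rfl rfl
    · rcases h with h | h | h | h <;> omega
    · exact Or.inr (Or.inr (Or.inl ⟨h, by trivial⟩))
  have hAlast2 : ∀ (b : Fin (n+1)), starPendAdj n k (Fin.last (n+1)) b.castSucc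
      = if b.val = k then 1 else 0 := by
    intro b
    have hb := b.isLt
    simp only [starPendAdj, Matrix.of_apply, Fin.coe_castSucc, Fin.val_last]
    refine if_congr ⟨fun h => ?_, fun h => ?_⟩ rfl rfl
    · rcases h with h | h | h | h <;> omega
    · exact Or.inr (Or.inr (Or.inr ⟨h, by trivial⟩))
  have hAll : starPendAdj n k (Fin.last (n+1)) (Fin.last (n+1)) = 0 := by
    simp only [starPendAdj, Matrix.of_apply, Fin.val_last]
    rw [if_neg]; omega
  have hne : ∀ a : Fin (n+1), ¬ ((a.castSucc : Fin (n+2)).val = n+1) := by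
    intro a; have := a.isLt; simp only [Fin.coe_castSucc]; omega
  have hrcast : ∀ (a : Fin (n+1)),
      (fun j : Fin (n+2) => if hj : j.val = n+1 then r ⟨k, by omega⟩
        else r ⟨j.val, by have := j.isLt; omega⟩) a.castSucc = r a := by
    intro a
    simp only [dif_neg (hne a)]
    rfl
  refine ⟨?_, ?_, ?_, ?_⟩
  · intro i
    dsimp only
    split_ifs with h1 h2
    · norm_num
    · have := hd ⟨k, by omega⟩; omega
    · exact hd _
  · intro i
    dsimp only
    split_ifs
    · exact hr _
    · exact hr _
  · have h1 : (Finset.univ.gcd fun j : Fin (n+2) =>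
        if hj : j.val = n+1 then r ⟨k, by omega⟩
        else r ⟨j.val, by have := j.isLt; omega⟩) ∣ 1 := by
      have h0 : (Finset.univ.gcd fun j : Fin (n+2) =>
          if hj : j.val = n+1 then r ⟨k, by omega⟩
          else r ⟨j.val, by have := j.isLt; omega⟩) ∣ Finset.univ.gcd r := by
        refine Finset.dvd_gcd fun i _ => ?_
        exact dvd_trans (Finset.gcd_dvd (Finset.mem_univ i.castSucc)) (hrcast i).dvd
      rwa [hgcd] at h0
    have h2 := normalize_eq_one.mpr (isUnit_of_dvd_one h1)
    rwa [Finset.normalize_gcd] at h2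
  · funext i
    rw [Pi.zero_apply, Matrix.sub_mulVec, Pi.sub_apply, Matrix.mulVec_diagonal,
      sub_eq_zero]
    show _ = ∑ j, starPendAdj n k i j * _
    rw [Fin.sum_univ_castSucc]
    have hkfin : ∀ j : Fin (n+1), (j.val = k) = (j = ⟨k, by omega⟩) :=
      fun j => propext ⟨fun hh => Fin.ext hh, fun hh => by rw [hh]⟩
    induction i using Fin.lastCases with
    | last =>
      beta_reduce
      rw [dif_pos (show (Fin.last (n+1)).val = n+1 from rfl),
          dif_pos (show (Fin.last (n+1)).val = n+1 from rfl),
          hAll, zero_mul, add_zero, one_mul]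
      simp only [hAlast2, hrcast, hkfin, ite_mul, one_mul, zero_mul,
        Finset.sum_ite_eq', Finset.mem_univ, if_true]
    | cast a =>
      beta_reduce
      rw [dif_neg (hne a), dif_neg (hne a),
          dif_pos (show (Fin.last (n+1)).val = n+1 from rfl)]
      have hfalse : ∀ x : Fin (n+1), ((x.castSucc : Fin (n+2)).val = n+1) = False :=
        fun x => eq_false (hne x)
      have hfalse2 : ∀ x : Fin (n+1), ((x : ℕ) = n+1) = False :=
        fun x => eq_false (by have := x.isLt; omega)
      simp only [hA, hAlast, hfalse, hfalse2, dite_false, Fin.coe_castSucc, Fin.eta]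
      rcases eq_or_ne a.val k with hak | hak
      · rw [if_pos hak, if_pos hak, one_mul]
        have ha : a = (⟨k, by omega⟩ : Fin (n+1)) := Fin.ext hak
        rw [ha]
        have hk := key (⟨k, by omega⟩ : Fin (n+1))
        linarith [hk]
      · rw [if_neg hak, if_neg hak, zero_mul, add_zero]
        exact key a
end
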